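/- A deterministic weak Büchi automaton can be complemented by swapping accepting and non-accepting states: if A is a complete deterministic Büchi automaton in which every strongly connected component consists entirely of accepting states or entirely of non-accepting states, then the automaton A' obtained by complementing the set of accepting states satisfies L(A') = Σ^ω \ L(A). -/

import Mathlib

/-!
By finiteness, if a run visits `F` and its complement infinitely often, then some state `q ∉ F`
and some state `q' ∈ F` are each visited infinitely often. Along the run each of them is then
reachable from the other, so they lie in one strongly connected component, which in a weak
automaton cannot meet both `F` and its complement.
-/

/-- The unique run of a complete deterministic automaton on an ω-word. -/
def detRun {α σ : Type*} (step : σ → α → σ) (q0 : σ) (w : ℕ → α) : ℕ → σ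
  | 0 => q0
  | n + 1 => step (detRun step q0 w n) (w n)

/-- Edge relation of the transition graph of a deterministic automaton. -/
def dedge {α σ : Type*} (step : σ → α → σ) (q q' : σ) : Prop := ∃ a, step q a = q'

open Filter

theorem Filter.Frequently.exists_frequently_eq {ι σ : Type*} [Finite σ] {l : Filter ι}
    {f : ι → σ} {P : σ → Prop} (h : ∃ᶠ i in l, P (f i)) : ∃ q, P q ∧ ∃ᶠ i in l, f i = q := by
  have h' : ∃ᶠ i in l, ∃ q, P q ∧ f i = q := h.mono fun i hi => ⟨f i, hi, rfl⟩
  simpa only [frequently_exists, frequently_and_distrib_left] using h'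

section detRun

variable {α σ : Type*} (step : σ → α → σ) (q0 : σ) (w : ℕ → α)

theorem reflTransGen_dedge_detRun {m n : ℕ} (hmn : m ≤ n) :
    Relation.ReflTransGen (dedge step) (detRun step q0 w m) (detRun step q0 w n) := by
  induction n, hmn using Nat.le_induction with
  | base => exact .refl
  | succ n _ ih => exact ih.tail ⟨w n, rfl⟩

theorem reflTransGen_dedge_of_frequently_detRun_eq {q q' : σ}
    (hq : ∃ᶠ n in atTop, detRun step q0 w n = q) (hq' : ∃ᶠ n in atTop, detRun step q0 w n = q') :
    Relation.ReflTransGen (dedge step) q q' := by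
  obtain ⟨m, rfl⟩ := hq.exists
  obtain ⟨n, hmn, rfl⟩ := frequently_atTop.mp hq' m
  exact reflTransGen_dedge_detRun step q0 w hmn

end detRun

/-- A complete deterministic weak Büchi automaton is complemented by
complementing its set of accepting states. -/
theorem stmt_13 {α σ : Type*} [Fintype σ] (step : σ → α → σ) (q0 : σ) (F : Set σ)
    (hweak : ∀ q q', Relation.ReflTransGen (dedge step) q q' →
      Relation.ReflTransGen (dedge step) q' q → (q ∈ F ↔ q' ∈ F)) :
    ∀ w : ℕ → α,
      (∀ N, ∃ n ≥ N, detRun step q0 w n ∈ Fᶜ)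
        ↔ ¬ (∀ N, ∃ n ≥ N, detRun step q0 w n ∈ F) := by
  intro w
  simp only [ge_iff_le, ← frequently_atTop]
  constructor
  · intro hout hin
    obtain ⟨q, hqF, hq⟩ := hout.exists_frequently_eq
    obtain ⟨q', hq'F, hq'⟩ := hin.exists_frequently_eq
    exact hqF <| (hweak q q' (reflTransGen_dedge_of_frequently_detRun_eq step q0 w hq hq')
      (reflTransGen_dedge_of_frequently_detRun_eq step q0 w hq' hq)).mpr hq'F
  · intro hin
    exact (not_frequently.mp hin).frequently
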